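/- Let q ∈ (0,1) with q > 1/2, and let p ∈ Δ_2 with p_1 < p_2. Then G^n(p) converges to (0, 1, 0) as n → ∞. -/

import Mathlib

open Filter Topology

/-- The map G = (G₁,G₂,G₃) on ℝ³ (with parameter q):
G₁(x) = x₁² + 2q x₁ x₃, G₂(x) = x₂² + 2q x₂ x₃,
G₃(x) = x₃² + 2 x₁ x₂ + 2(1−q) x₁ x₃ + 2(1−q) x₂ x₃. -/
noncomputable def Gmap (q : ℝ) (x : ℝ × ℝ × ℝ) : ℝ × ℝ × ℝ :=
  (x.1 ^ 2 + 2 * q * x.1 * x.2.2,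
   x.2.1 ^ 2 + 2 * q * x.2.1 * x.2.2,
   x.2.2 ^ 2 + 2 * x.1 * x.2.1 + 2 * (1 - q) * x.1 * x.2.2
     + 2 * (1 - q) * x.2.1 * x.2.2)

/-- The open simplex Δ₂ ⊆ ℝ³. -/
def simplex2 : Set (ℝ × ℝ × ℝ) :=
  {p | p.1 + p.2.1 + p.2.2 = 1 ∧ 0 < p.1 ∧ 0 < p.2.1 ∧ 0 < p.2.2}

/-!
Write `(a, b, t)` for the iterates. With `a + b + t = 1` the map satisfies
`b' - a' = (b - a) (1 + (2q - 1) t)`, so for `q > 1/2` the gap `b - a` is nondecreasing and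
bounded by `1`. It therefore converges, which forces `t → 0` because
`t ≤ (gap' - gap) / ((2q - 1) gap₀)`. Moreover `a' / b' = (a / b) (a + 2qt) / (b + 2qt)` and
the last factor is at most `1 - gap₀ / 2`, so `a / b`, hence `a`, decays geometrically.
Finally `b = 1 - a - t → 1`.
-/

theorem Filter.Tendsto.succ_sub_nhds_zero {G : Type*} [AddCommGroup G] [TopologicalSpace G]
    [IsTopologicalAddGroup G] {u : ℕ → G} {L : G} (h : Tendsto u atTop (𝓝 L)) :
    Tendsto (fun n => u (n + 1) - u n) atTop (𝓝 0) := by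
  simpa using (h.comp (tendsto_add_atTop_nat 1)).sub h

theorem tendsto_nhds_zero_of_succ_le_mul {u : ℕ → ℝ} {c : ℝ} (hu : ∀ n, 0 ≤ u n)
    (hc0 : 0 ≤ c) (hc1 : c < 1) (h : ∀ n, u (n + 1) ≤ c * u n) :
    Tendsto u atTop (𝓝 0) := by
  have hgeom : Tendsto (fun n => c ^ n * u 0) atTop (𝓝 0) := by
    simpa using (tendsto_pow_atTop_nhds_zero_of_lt_one hc0 hc1).mul_const (u 0)
  exact squeeze_zero hu (fun n => le_geom hc0 n fun k _ => h k) hgeom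

section Gmap

variable {q : ℝ} {x : ℝ × ℝ × ℝ}

theorem Gmap_snd_sub_fst (hx : x.1 + x.2.1 + x.2.2 = 1) :
    (Gmap q x).2.1 - (Gmap q x).1 = (x.2.1 - x.1) * (1 + (2 * q - 1) * x.2.2) := by
  simp only [Gmap]
  linear_combination (x.2.1 - x.1) * hx

theorem mapsTo_Gmap_simplex2 (hq0 : 0 ≤ q) (hq1 : q ≤ 1) :
    Set.MapsTo (Gmap q) simplex2 simplex2 := by
  rintro x ⟨hsum, h1, h2, h3⟩
  have hq' : 0 ≤ 1 - q := by linarith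
  refine ⟨?_, ?_, ?_, ?_⟩ <;> simp only [Gmap]
  · linear_combination (x.1 + x.2.1 + x.2.2 + 1) * hsum
  · positivity
  · positivity
  · positivity

theorem mapsTo_Gmap_fst_lt_snd (hq0 : 0 ≤ q) (hq1 : q ≤ 1) :
    Set.MapsTo (Gmap q) {x | x ∈ simplex2 ∧ x.1 < x.2.1} {x | x ∈ simplex2 ∧ x.1 < x.2.1} := by
  rintro x ⟨hx, hlt⟩
  refine ⟨mapsTo_Gmap_simplex2 hq0 hq1 hx, sub_pos.mp ?_⟩
  obtain ⟨hsum, h1, h2, h3⟩ := hx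
  have hfactor : 0 < 1 + (2 * q - 1) * x.2.2 := by nlinarith
  rw [Gmap_snd_sub_fst hsum]
  exact mul_pos (sub_pos.mpr hlt) hfactor

theorem Gmap_fst_div_snd_le (hq0 : 0 ≤ q) (hq1 : q ≤ 1) (hx : x ∈ simplex2)
    (hle : x.1 ≤ x.2.1) :
    (Gmap q x).1 / (Gmap q x).2.1 ≤ (1 - (x.2.1 - x.1) / 2) * (x.1 / x.2.1) := by
  obtain ⟨hsum, h1, h2, h3⟩ := hx
  set s := x.2.1 + 2 * q * x.2.2
  have hs : 0 < s := by positivity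
  have hs2 : s ≤ 2 := by nlinarith
  have hfactor : (x.1 + 2 * q * x.2.2) / s ≤ 1 - (x.2.1 - x.1) / 2 := by
    rw [div_le_iff₀ hs]
    nlinarith [mul_nonneg (sub_nonneg.mpr hle) (sub_nonneg.mpr hs2)]
  calc (Gmap q x).1 / (Gmap q x).2.1 = (x.1 + 2 * q * x.2.2) / s * (x.1 / x.2.1) := by
        simp only [Gmap, s]
        field_simp
    _ ≤ (1 - (x.2.1 - x.1) / 2) * (x.1 / x.2.1) := by gcongr

end Gmap
section orbit

variable {q : ℝ} {p : ℝ × ℝ × ℝ}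

theorem iterate_Gmap_mem (hq0 : 0 ≤ q) (hq1 : q ≤ 1) (hp : p ∈ simplex2) (h12 : p.1 < p.2.1)
    (n : ℕ) : (Gmap q)^[n] p ∈ simplex2 ∧ ((Gmap q)^[n] p).1 < ((Gmap q)^[n] p).2.1 :=
  (mapsTo_Gmap_fst_lt_snd hq0 hq1).iterate n ⟨hp, h12⟩

theorem monotone_iterate_Gmap_snd_sub_fst (hq : 1 / 2 ≤ q) (hq1 : q ≤ 1) (hp : p ∈ simplex2)
    (h12 : p.1 < p.2.1) :
    Monotone fun n => ((Gmap q)^[n] p).2.1 - ((Gmap q)^[n] p).1 := by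
  refine monotone_nat_of_le_succ fun n => ?_
  obtain ⟨⟨hsum, -, -, ht⟩, hlt⟩ := iterate_Gmap_mem (by linarith) hq1 hp h12 n
  rw [Function.iterate_succ_apply', Gmap_snd_sub_fst hsum]
  have hfactor : 1 ≤ 1 + (2 * q - 1) * ((Gmap q)^[n] p).2.2 := by nlinarith
  exact le_mul_of_one_le_right (sub_pos.mpr hlt).le hfactor

theorem tendsto_iterate_Gmap_snd_snd (hq : 1 / 2 < q) (hq1 : q ≤ 1) (hp : p ∈ simplex2)
    (h12 : p.1 < p.2.1) : Tendsto (fun n => ((Gmap q)^[n] p).2.2) atTop (𝓝 0) := by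
  set d := fun n => ((Gmap q)^[n] p).2.1 - ((Gmap q)^[n] p).1
  have hmono : Monotone d := monotone_iterate_Gmap_snd_sub_fst hq.le hq1 hp h12
  have hbdd : BddAbove (Set.range d) := by
    refine ⟨1, Set.forall_mem_range.mpr fun n => ?_⟩
    obtain ⟨⟨hsum, ha, -, ht⟩, -⟩ := iterate_Gmap_mem (by linarith) hq1 hp h12 n
    simp only [d]
    linarith
  have hC : 0 < (2 * q - 1) * d 0 := mul_pos (by linarith) (sub_pos.mpr h12)
  -- Each step increases the gap by `(2q - 1) t d ≥ (2q - 1) d₀ t`.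
  have hbound : ∀ n, ((Gmap q)^[n] p).2.2 ≤ (d (n + 1) - d n) / ((2 * q - 1) * d 0) := by
    intro n
    obtain ⟨⟨hsum, -, -, ht⟩, -⟩ := iterate_Gmap_mem (by linarith) hq1 hp h12 n
    have hstep : d (n + 1) - d n = (2 * q - 1) * d n * ((Gmap q)^[n] p).2.2 := by
      simp only [d, Function.iterate_succ_apply', Gmap_snd_sub_fst hsum]
      ring
    rw [le_div_iff₀ hC, hstep]
    have h2q : 0 ≤ (2 * q - 1) * ((Gmap q)^[n] p).2.2 := mul_nonneg (by linarith) ht.le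
    nlinarith [mul_le_mul_of_nonneg_left (hmono (Nat.zero_le n)) h2q]
  have hdiff := (tendsto_atTop_ciSup hmono hbdd).succ_sub_nhds_zero
  refine squeeze_zero (fun n => (iterate_Gmap_mem (by linarith) hq1 hp h12 n).1.2.2.2.le)
    hbound ?_
  simpa using hdiff.div_const ((2 * q - 1) * d 0)

theorem tendsto_iterate_Gmap_fst (hq : 1 / 2 ≤ q) (hq1 : q ≤ 1) (hp : p ∈ simplex2)
    (h12 : p.1 < p.2.1) : Tendsto (fun n => ((Gmap q)^[n] p).1) atTop (𝓝 0) := by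
  have hmem := iterate_Gmap_mem (by linarith) hq1 hp h12
  have hmono := monotone_iterate_Gmap_snd_sub_fst hq hq1 hp h12
  set d₀ := p.2.1 - p.1 with hd₀
  have hratio : Tendsto (fun n => ((Gmap q)^[n] p).1 / ((Gmap q)^[n] p).2.1) atTop (𝓝 0) := by
    refine tendsto_nhds_zero_of_succ_le_mul (c := 1 - d₀ / 2)
      (fun n => div_nonneg (hmem n).1.2.1.le (hmem n).1.2.2.1.le) ?_ ?_ fun n => ?_
    · obtain ⟨hsum, h1, -, h3⟩ := hp
      linarith
    · linarith
    · rw [Function.iterate_succ_apply']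
      refine (Gmap_fst_div_snd_le (by linarith) hq1 (hmem n).1 (hmem n).2.le).trans ?_
      gcongr
      · exact div_nonneg (hmem n).1.2.1.le (hmem n).1.2.2.1.le
      · exact hmono (Nat.zero_le n)
  refine squeeze_zero (fun n => (hmem n).1.2.1.le) (fun n => ?_) hratio
  obtain ⟨⟨hsum, ha, hb, ht⟩, -⟩ := hmem n
  exact le_div_self ha.le hb (by linarith)

end orbit

theorem tendsto_second_state_general (q : ℝ) (hq1 : q < 1)
    (hq : 1 / 2 < q) (p : ℝ × ℝ × ℝ) (hp : p ∈ simplex2) (h12 : p.1 < p.2.1) :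
    Tendsto (fun n => (Gmap q)^[n] p) atTop (𝓝 ((0 : ℝ), (1 : ℝ), (0 : ℝ))) := by
  have ha := tendsto_iterate_Gmap_fst hq.le hq1.le hp h12
  have ht := tendsto_iterate_Gmap_snd_snd hq hq1.le hp h12
  have hb : Tendsto (fun n => ((Gmap q)^[n] p).2.1) atTop (𝓝 1) := by
    have hsum n := (iterate_Gmap_mem (by linarith) hq1.le hp h12 n).1.1
    have := (tendsto_const_nhds (x := (1 : ℝ))).sub ha |>.sub ht
    simp only [sub_zero] at this
    exact this.congr fun n => by linarith [hsum n]
  rw [Prod.tendsto_iff, Prod.tendsto_iff]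
  exact ⟨ha, hb, ht⟩

/-- If q > 1/2 and p₁ < p₂, then G^n(p) → (0,1,0). -/
theorem tendsto_second_state (q : ℝ) (hq0 : 0 < q) (hq1 : q < 1)
    (hq : 1 / 2 < q) (p : ℝ × ℝ × ℝ) (hp : p ∈ simplex2) (h12 : p.1 < p.2.1) :
    Tendsto (fun n => (Gmap q)^[n] p) atTop (𝓝 ((0 : ℝ), (1 : ℝ), (0 : ℝ))) :=
  tendsto_second_state_general q hq1 hq p hp h12
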